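/- arXiv:1810.07090 — 3 statements merged into one kernel-verified Lean document; each statement's English description precedes it below -/
import Mathlib

section
/- Let D be a division ring with center F and G a subgroup of D* such that G/(G ∩ F*) is locally finite. Then the division subring F(G) of D generated by F and G is locally finite dimensional over F; that is, every finite subset of F(G) is contained in a division subring of D that is finite dimensional as an F-vector space. -/
/-- A group is locally finite if every finitely generated subgroup is finite. -/
def IsLocallyFinite (G : Type*) [Group G] : Prop :=
  ∀ H : Subgroup G, H.FG → Finite H

/-- A division subring `E` of `D` is finite dimensional over the center `F` of `D`
if finitely many of its elements span it as a left `F`-vector space. -/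
def FinDimOverCenter {D : Type*} [DivisionRing D] (E : Subfield D) : Prop :=
  ∃ (n : ℕ) (b : Fin n → D), (∀ i, b i ∈ E) ∧
    ∀ y ∈ E, ∃ c : Fin n → Subring.center D, y = ∑ i, (c i : D) * b i

/-!
If `H ≤ G` is finitely generated, its image in `G ⧸ (G ∩ F*)` is finite, so `H` is covered by
finitely many cosets `r (G ∩ F*)`; as `G ∩ F*` consists of scalars, the `F`-algebra generated by
`H`, which is the `F`-span of `H`, is spanned by the finitely many representatives `r`. A
finite-dimensional subalgebra of a division ring is Artinian without zero divisors, hence a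
division ring. Every finite subset of `F(G)` already lies in the division ring generated by `F`
and finitely many elements of `G`, so it lies in such a finite-dimensional division subring.
-/

theorem Subfield.exists_finite_subset_of_mem_closure {K : Type*} [DivisionRing K] {S : Set K}
    {x : K} (hx : x ∈ closure S) : ∃ t ⊆ S, t.Finite ∧ x ∈ closure t := by
  induction hx using Subfield.closure_induction with
  | mem x hx => exact ⟨{x}, Set.singleton_subset_iff.mpr hx, Set.finite_singleton x,
      subset_closure rfl⟩
  | one => exact ⟨∅, Set.empty_subset S, Set.finite_empty, one_mem _⟩
  | add x y _ _ hx hy =>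
    obtain ⟨t, htS, ht, hxt⟩ := hx
    obtain ⟨u, huS, hu, hyu⟩ := hy
    exact ⟨t ∪ u, Set.union_subset htS huS, ht.union hu,
      add_mem (closure_mono Set.subset_union_left hxt) (closure_mono Set.subset_union_right hyu)⟩
  | neg x _ hx =>
    obtain ⟨t, htS, ht, hxt⟩ := hx
    exact ⟨t, htS, ht, neg_mem hxt⟩
  | inv x _ hx =>
    obtain ⟨t, htS, ht, hxt⟩ := hx
    exact ⟨t, htS, ht, inv_mem hxt⟩
  | mul x y _ _ hx hy =>
    obtain ⟨t, htS, ht, hxt⟩ := hx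
    obtain ⟨u, huS, hu, hyu⟩ := hy
    exact ⟨t ∪ u, Set.union_subset htS huS, ht.union hu,
      mul_mem (closure_mono Set.subset_union_left hxt) (closure_mono Set.subset_union_right hyu)⟩

theorem Subfield.exists_finite_subset_of_subset_closure {K : Type*} [DivisionRing K]
    {S s : Set K} (hs : s.Finite) (hsS : s ⊆ closure S) :
    ∃ t ⊆ S, t.Finite ∧ s ⊆ closure t := by
  choose! t htS ht hxt using fun x (hx : x ∈ s) => exists_finite_subset_of_mem_closure (hsS hx)
  refine ⟨⋃ x ∈ s, t x, Set.iUnion₂_subset htS, hs.biUnion ht, fun x hx => ?_⟩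
  exact closure_mono (Set.subset_biUnion_of_mem hx) (hxt x hx)

theorem QuotientGroup.exists_finite_subset_forall_eq_mul_of_finite_image_mk {G : Type*} [Group G]
    (N : Subgroup G) {S : Set G} (hS : ((QuotientGroup.mk : G → G ⧸ N) '' S).Finite) :
    ∃ R ⊆ S, R.Finite ∧ ∀ s ∈ S, ∃ r ∈ R, ∃ n ∈ N, s = r * n := by
  obtain ⟨R, hRS, hinj, himage⟩ :=
    (Set.surjOn_image (QuotientGroup.mk : G → G ⧸ N) S).exists_subset_injOn_image_eq
  refine ⟨R, hRS, Set.Finite.of_finite_image (himage ▸ hS) hinj, fun s hs => ?_⟩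
  obtain ⟨r, hr, hrs⟩ := himage.symm ▸ Set.mem_image_of_mem _ hs
  exact ⟨r, hr, r⁻¹ * s, QuotientGroup.eq.mp hrs, (mul_inv_cancel_left r s).symm⟩

theorem Algebra.finite_adjoin_map_of_finite_image_mk {K A G : Type*} [CommSemiring K] [Semiring A]
    [Algebra K A] [Group G] (ι : G →* A) (N : Subgroup G)
    (hN : ∀ n ∈ N, ι n ∈ Set.range (algebraMap K A)) (H : Submonoid G)
    (hH : ((QuotientGroup.mk : G → G ⧸ N) '' H).Finite) :
    Module.Finite K (adjoin K (H.map ι : Set A)) := by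
  obtain ⟨R, hRH, hR, hcover⟩ :=
    QuotientGroup.exists_finite_subset_forall_eq_mul_of_finite_image_mk N hH
  suffices Subalgebra.toSubmodule (adjoin K (H.map ι : Set A)) = Submodule.span K (ι '' R) from
    Module.Finite.iff_fg.mpr (this ▸ Submodule.fg_span (hR.image ι))
  rw [adjoin_eq_span, Submonoid.closure_eq]
  refine le_antisymm (Submodule.span_le.mpr ?_) (Submodule.span_mono (Set.image_mono hRH))
  rintro _ ⟨h, hh, rfl⟩
  obtain ⟨r, hr, n, hn, rfl⟩ := hcover h hh
  obtain ⟨c, hc⟩ := hN n hn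
  rw [map_mul, ← hc, ← commutes, ← smul_def]
  exact Submodule.smul_mem _ c (Submodule.subset_span (Set.mem_image_of_mem ι hr))

theorem Subalgebra.inv_mem_of_finite {K D : Type*} [CommRing K] [IsArtinianRing K]
    [DivisionRing D] [Algebra K D] (A : Subalgebra K D) [Module.Finite K A] {x : D}
    (hx : x ∈ A) : x⁻¹ ∈ A := by
  rcases eq_or_ne x 0 with rfl | hx0
  · simp
  have : IsArtinianRing A := isArtinian_of_tower K inferInstance
  have hx' : (⟨x, hx⟩ : A) ∈ nonZeroDivisors A :=
    mem_nonZeroDivisors_of_ne_zero (by simpa [← Subtype.val_inj] using hx0)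
  obtain ⟨⟨y, hy⟩, hxy⟩ := (IsArtinianRing.isUnit_of_mem_nonZeroDivisors hx').exists_right_inv
  rwa [inv_eq_of_mul_eq_one_right (congrArg Subtype.val hxy)]

def Subalgebra.toSubfieldOfFinite {K D : Type*} [CommRing K] [IsArtinianRing K]
    [DivisionRing D] [Algebra K D] (A : Subalgebra K D) [Module.Finite K A] : Subfield D :=
  { A.toSubring with inv_mem' := fun _ => A.inv_mem_of_finite }

theorem Subalgebra.finDimOverCenter_toSubfieldOfFinite {D : Type*} [DivisionRing D]
    (A : Subalgebra (Subring.center D) D) [Module.Finite (Subring.center D) A] :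
    FinDimOverCenter A.toSubfieldOfFinite := by
  obtain ⟨n, b, hb⟩ := Submodule.fg_iff_exists_fin_generating_family.mp
    (Module.Finite.iff_fg.mp ‹_› : (Subalgebra.toSubmodule A).FG)
  have hmem : ∀ y, y ∈ A.toSubfieldOfFinite ↔ y ∈ Submodule.span _ (Set.range b) :=
    fun y => by rw [hb]; rfl
  refine ⟨n, b, fun i => (hmem _).mpr (Submodule.subset_span (Set.mem_range_self i)),
    fun y hy => ?_⟩
  obtain ⟨c, hc⟩ := (Submodule.mem_span_range_iff_exists_fun _).mp ((hmem y).mp hy)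
  exact ⟨c, hc.symm⟩

theorem IsLocallyFinite.finite_image_closure {G Q : Type*} [Group G] [Group Q]
    (hQ : IsLocallyFinite Q) (f : G →* Q) {T : Set G} (hT : T.Finite) :
    (f '' Subgroup.closure T).Finite := by
  have : Finite ((Subgroup.closure T).map f) :=
    hQ _ ((Subgroup.fg_iff _).mpr ⟨f '' T, (MonoidHom.map_closure f T).symm, hT.image f⟩)
  rw [← Subgroup.coe_map]
  exact Set.toFinite _

/-- Let `D` be a division ring with center `F` and `G ≤ Dˣ` such that `G/(G ∩ F*)`
is locally finite.  Then the division subring `F(G)` generated by `F ∪ G` is locally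
finite dimensional over `F`: every finite subset of `F(G)` is contained in a
division subring of `D` that is finite dimensional over `F`. -/
theorem locallyFiniteDim_of_centerQuotient_locallyFinite
    (D : Type*) [DivisionRing D] (G : Subgroup Dˣ)
    (N : Subgroup G)
    (hN : ∀ g : G, g ∈ N ↔ ((g : Dˣ) : D) ∈ Subring.center D)
    [N.Normal]
    (hlf : IsLocallyFinite (G ⧸ N)) :
    ∀ s : Finset D,
      (↑s : Set D) ⊆
        (Subfield.closure ((Subring.center D : Set D) ∪ (Units.val '' (G : Set Dˣ))) : Set D) →
      ∃ E : Subfield D, (↑s : Set D) ⊆ (E : Set D) ∧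
        (E : Set D) ⊆
          (Subfield.closure ((Subring.center D : Set D) ∪ (Units.val '' (G : Set Dˣ))) : Set D) ∧
        FinDimOverCenter E := by
  intro s hs
  obtain ⟨t, htX, ht, hst⟩ := Subfield.exists_finite_subset_of_subset_closure s.finite_toSet hs
  let ι : G →* D := (Units.coeHom D).comp G.subtype
  let H := Subgroup.closure (ι ⁻¹' t)
  have hH : ((QuotientGroup.mk : G → G ⧸ N) '' H).Finite :=
    hlf.finite_image_closure (QuotientGroup.mk' N)
      (ht.preimage (Units.val_injective.comp Subtype.val_injective).injOn)
  let A := Algebra.adjoin (Subring.center D) (H.toSubmonoid.map ι : Set D)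
  have : Module.Finite (Subring.center D) A :=
    Algebra.finite_adjoin_map_of_finite_image_mk ι N (fun n hn => ⟨⟨_, (hN n).mp hn⟩, rfl⟩)
      H.toSubmonoid hH
  refine ⟨A.toSubfieldOfFinite, hst.trans (Subfield.closure_le.mpr ?_), fun x hx => ?_,
    A.finDimOverCenter_toSubfieldOfFinite⟩
  · rintro x hx
    rcases htX hx with hxF | ⟨u, hu, rfl⟩
    · exact A.algebraMap_mem (⟨x, hxF⟩ : Subring.center D)
    · exact Algebra.subset_adjoin ⟨⟨u, hu⟩, Subgroup.subset_closure hx, rfl⟩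
  · refine (Subring.closure_le (t := Subfield.toSubring _)).mpr ?_ (Algebra.mem_adjoin_iff.mp hx)
    rintro _ (⟨c, rfl⟩ | ⟨g, -, rfl⟩)
    · exact Subfield.subset_closure (Or.inl c.2)
    · exact Subfield.subset_closure (Or.inr ⟨g, g.2, rfl⟩)
end

section
/- Let D be a division ring with center F, G a subgroup of D*, and A a finitely generated subgroup of G such that A F*/F* is finite with transversal y_1, ..., y_n of F* in A F*. Then R = F y_1 + F y_2 + ... + F y_n is a division subring of D that is finite dimensional over F. -/
/-- Let `D` be a division ring with center `F`, `G ≤ Dˣ`, and `A` a finitely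
generated subgroup of `G` such that `A F*/F*` is finite with transversal
`y 1, …, y n` of `F*` in `A F*`.  Then `R = F y₁ + ⋯ + F yₙ` is a division subring
of `D` that is finite dimensional over `F`. -/
theorem span_of_transversal_is_division_subring
    (D : Type*) [DivisionRing D] (G : Subgroup Dˣ)
    (Fstar : Subgroup Dˣ) (hF : ∀ u : Dˣ, u ∈ Fstar ↔ (u : D) ∈ Subring.center D)
    (A : Subgroup Dˣ) (hAG : A ≤ G) (hAfg : A.FG)
    (n : ℕ) (y : Fin n → Dˣ)
    (hy : ∀ i, y i ∈ A ⊔ Fstar)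
    (htrans : ∀ z ∈ A ⊔ Fstar, ∃! i : Fin n, (y i)⁻¹ * z ∈ Fstar) :
    ∃ E : Subfield D,
      (E : Set D) = {d : D | ∃ c : Fin n → Subring.center D, d = ∑ i, (c i : D) * (y i : D)} ∧
      FinDimOverCenter E := by
  classical
  set F := Subring.center D with hFdef
  set M : Submodule F D := Submodule.span F (Set.range (fun i => (y i : D))) with hM
  have hmemM : ∀ d : D, d ∈ M ↔
      ∃ c : Fin n → F, d = ∑ i, (c i : D) * (y i : D) := by
    intro d
    rw [hM, Submodule.mem_span_range_iff_exists_fun]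
    have hrw : ∀ c : Fin n → F,
        ∑ i, c i • (y i : D) = ∑ i, (c i : D) * (y i : D) :=
      fun c => Finset.sum_congr rfl fun i _ => rfl
    constructor
    · rintro ⟨c, hc⟩
      exact ⟨c, by rw [← hc, hrw]⟩
    · rintro ⟨c, hc⟩
      exact ⟨c, by rw [hrw, ← hc]⟩
  -- each y i is in M
  have hyM : ∀ i, (y i : D) ∈ M :=
    fun i => Submodule.subset_span ⟨i, rfl⟩
  -- 1 ∈ M
  have h1 : (1 : D) ∈ M := by
    obtain ⟨k, hk, -⟩ := htrans 1 (one_mem _)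
    rw [mul_one] at hk
    have hc : ((y k)⁻¹ : Dˣ).val ∈ Subring.center D := (hF _).mp hk
    have : (1 : D) = (((y k)⁻¹ : Dˣ) : D) * (y k : D) := by
      rw [← Units.val_mul, inv_mul_cancel, Units.val_one]
    rw [this]
    exact M.smul_mem (⟨_, hc⟩ : F) (hyM k)
  -- closure under multiplication
  have hmul : ∀ a ∈ M, ∀ b ∈ M, a * b ∈ M := by
    have key : ∀ i j : Fin n, (y i : D) * (y j : D) ∈ M := by
      intro i j
      have hij : y i * y j ∈ A ⊔ Fstar := mul_mem (hy i) (hy j)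
      obtain ⟨k, hk, -⟩ := htrans _ hij
      have hc : (((y k)⁻¹ * (y i * y j) : Dˣ) : D) ∈ Subring.center D := (hF _).mp hk
      have h10 : (y k : D) * (((y k)⁻¹ * (y i * y j) : Dˣ) : D) = ((y i * y j : Dˣ) : D) := by
        rw [← Units.val_mul, mul_inv_cancel_left]
      have h11 : (y i : D) * (y j : D) =
          (((y k)⁻¹ * (y i * y j) : Dˣ) : D) * (y k : D) := by
        rw [← Subring.mem_center_iff.mp hc (y k : D), h10, Units.val_mul]
      rw [h11]
      exact M.smul_mem (⟨_, hc⟩ : F) (hyM k)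
    intro a ha b hb
    have h2 : M * M ≤ M := by
      rw [hM, Submodule.span_mul_span]
      apply Submodule.span_le.mpr
      rintro _ ⟨_, ⟨i, rfl⟩, _, ⟨j, rfl⟩, rfl⟩
      exact key i j
    exact h2 (Submodule.mul_mem_mul ha hb)
  -- finite dimensionality of M
  have hfd : FiniteDimensional F M :=
    FiniteDimensional.span_of_finite F (Set.finite_range _)
  -- closure under inverses
  have hinv : ∀ a ∈ M, a⁻¹ ∈ M := by
    intro a ha
    rcases eq_or_ne a 0 with rfl | ha0
    · simpa using M.zero_mem
    · -- left multiplication by a as a linear map on M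
      let f : M →ₗ[F] M :=
        { toFun := fun m => ⟨a * m, hmul a ha m m.2⟩
          map_add' := by intro m₁ m₂; ext; simp [mul_add]
          map_smul' := by
            intro c m; ext
            show a * ((c : D) * (m : D)) = (c : D) * (a * (m : D))
            rw [← mul_assoc, Subring.mem_center_iff.mp c.2 a, mul_assoc] }
      have hinj : Function.Injective f := by
        intro m₁ m₂ h
        have : a * (m₁ : D) = a * (m₂ : D) := congrArg Subtype.val h
        exact Subtype.ext (mul_left_cancel₀ ha0 this)
      obtain ⟨r, hr⟩ := (LinearMap.injective_iff_surjective.mp hinj) ⟨1, h1⟩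
      have hr' : a * (r : D) = 1 := congrArg Subtype.val hr
      rw [inv_eq_of_mul_eq_one_right hr']
      exact r.2
  refine ⟨{ carrier := M
            mul_mem' := fun ha hb => hmul _ ha _ hb
            one_mem' := h1
            add_mem' := fun ha hb => M.add_mem ha hb
            zero_mem' := M.zero_mem
            neg_mem' := fun ha => M.neg_mem ha
            inv_mem' := fun a ha => hinv a ha }, ?_, ?_⟩
  · ext d
    exact hmemM d
  · refine ⟨n, fun i => (y i : D), fun i => hyM i, ?_⟩
    intro d hd
    obtain ⟨c, hc⟩ := (hmemM d).mp hd
    exact ⟨c, hc⟩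
end

section
/- Let D be a division ring with center F and let T be a locally solvable periodic group. If T is a subgroup of D*, then T is locally finite. -/
/-!
The abelianization of a finitely generated torsion group is a finitely generated torsion abelian
group, hence finite. So the commutator subgroup has finite index, and is therefore again finitely
generated (Schreier) and torsion, with derived length one less. Induction on the derived length
shows that a finitely generated solvable torsion group is finite, which is local finiteness for a
locally solvable torsion group.
-/

/-- A group is locally solvable if every finitely generated subgroup is solvable. -/
def IsLocallySolvable (G : Type*) [Group G] : Prop :=
  ∀ H : Subgroup G, H.FG → IsSolvable H

theorem map_subtype_derivedSeries_commutator (G : Type*) [Group G] (n : ℕ) :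
    (derivedSeries (commutator G) n).map (commutator G).subtype = derivedSeries G (n + 1) := by
  induction n with
  | zero =>
    rw [derivedSeries_zero, ← MonoidHom.range_eq_map, Subgroup.range_subtype, derivedSeries_one]
  | succ n ih =>
    rw [derivedSeries_succ, Subgroup.map_commutator, ih, derivedSeries_succ G (n + 1)]

theorem Group.finiteIndex_commutator_of_fg_of_isMulTorsion {G : Type*} [Group G] [Group.FG G]
    (hG : IsMulTorsion G) : (commutator G).FiniteIndex := by
  have hsurj : Function.Surjective (Abelianization.of : G →* Abelianization G) :=
    QuotientGroup.mk_surjective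
  have : Group.FG (Abelianization G) := Group.fg_of_surjective hsurj
  have : Finite (Abelianization G) :=
    CommGroup.finite_of_fg_isMulTorsion _ (hG.of_surjective hsurj)
  have : Finite (G ⧸ commutator G) := this
  exact Subgroup.finiteIndex_of_finite_quotient

theorem Group.finite_of_fg_of_isMulTorsion_of_derivedSeries_eq_bot (n : ℕ) :
    ∀ {G : Type*} [Group G] [Group.FG G],
      IsMulTorsion G → derivedSeries G n = ⊥ → Finite G := by
  induction n with
  | zero =>
    intro G _ _ _ hbot
    rw [derivedSeries_zero] at hbot
    have := Subgroup.subsingleton_iff.mp (subsingleton_of_top_le_bot hbot.le)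
    exact Finite.of_subsingleton
  | succ n ih =>
    intro G _ _ hG hbot
    have := finiteIndex_commutator_of_fg_of_isMulTorsion hG
    have hK : derivedSeries (commutator G) n = ⊥ := by
      rw [← Subgroup.map_eq_bot_iff_of_injective _ (commutator G).subtype_injective,
        map_subtype_derivedSeries_commutator, hbot]
    have : Finite (commutator G) := ih (hG.subgroup _) hK
    exact (Subgroup.finite_iff_finite_and_finiteIndex (commutator G)).mpr ⟨this, ‹_›⟩

theorem Group.IsSolvable.finite_of_fg_of_isMulTorsion {G : Type*} [Group G] [Group.IsSolvable G]
    [Group.FG G] (hG : IsMulTorsion G) : Finite G :=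
  let ⟨n, hn⟩ := Group.IsSolvable.solvable (G := G)
  Group.finite_of_fg_of_isMulTorsion_of_derivedSeries_eq_bot n hG hn

theorem IsLocallySolvable.isLocallyFinite_of_isMulTorsion {G : Type*} [Group G]
    (hls : IsLocallySolvable G) (hG : IsMulTorsion G) : IsLocallyFinite G := fun H hH ↦
  have : Group.IsSolvable H := hls H hH
  have : Group.FG H := (Group.fg_iff_subgroup_fg H).mpr hH
  Group.IsSolvable.finite_of_fg_of_isMulTorsion (hG.subgroup H)

/-- A periodic locally solvable subgroup of the multiplicative group of a division
ring is locally finite. -/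
theorem periodic_locallySolvable_subgroup_is_locallyFinite
    (D : Type*) [DivisionRing D] (T : Subgroup Dˣ)
    (hper : ∀ x ∈ T, IsOfFinOrder x)
    (hls : IsLocallySolvable T) :
    IsLocallyFinite T :=
  hls.isLocallyFinite_of_isMulTorsion fun x ↦
    T.subtype_injective.isOfFinOrder_iff.mp (hper x x.2)
end
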